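/- Let G be a tree and let Ḡ be a contraction of G. If a subtree R of Ḡ has at most s leaves and the contraction created at most q compound vertices inside R, then the preimage E(R) ⊆ E(G) is a union of at most 2s + q paths of G (i.e., a (2s+q)-bundle). -/

import Mathlib

open SimpleGraph
open scoped Classical

/-- The unique path between two vertices of a tree, as a walk. -/
noncomputable def tpath {V : Type*} (G : SimpleGraph V) (hG : G.IsTree) (u v : V) : G.Walk u v :=
  (hG.existsUnique_path u v).choose

set_option linter.unusedSectionVars false
set_option maxHeartbeats 1000000

section Aux

variable {V : Type*} [Fintype V] [DecidableEq V] {G : SimpleGraph V} (hG : G.IsTree)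

lemma tpath_isPath (u v : V) : (tpath G hG u v).IsPath :=
  (hG.existsUnique_path u v).choose_spec.1

lemma tpath_eq {u v : V} (p : G.Walk u v) (hp : p.IsPath) : p = tpath G hG u v :=
  (hG.existsUnique_path u v).choose_spec.2 p hp

lemma tpath_self (u : V) : tpath G hG u u = Walk.nil :=
  (tpath_eq hG Walk.nil (Walk.IsPath.nil)).symm

lemma tpath_adj {u v : V} (h : G.Adj u v) :
    tpath G hG u v = Walk.cons h Walk.nil := by
  refine (tpath_eq hG _ ?_).symm
  simp [Walk.isPath_def, h.ne]

lemma tpath_reverse (u v : V) : tpath G hG v u = (tpath G hG u v).reverse :=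
  (tpath_eq hG _ ((tpath_isPath hG u v).reverse)).symm

lemma mem_support_tpath_symm {u v z : V} :
    z ∈ (tpath G hG v u).support ↔ z ∈ (tpath G hG u v).support := by
  rw [tpath_reverse hG u v, Walk.support_reverse, List.mem_reverse]

lemma mem_edges_tpath_symm {u v : V} {e : Sym2 V} :
    e ∈ (tpath G hG v u).edges ↔ e ∈ (tpath G hG u v).edges := by
  rw [tpath_reverse hG u v, Walk.edges_reverse, List.mem_reverse]

lemma tpath_split {u v z : V} (hz : z ∈ (tpath G hG u v).support) :
    tpath G hG u v = (tpath G hG u z).append (tpath G hG z v) := by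
  have h1 : (tpath G hG u v).takeUntil z hz = tpath G hG u z :=
    tpath_eq hG _ ((tpath_isPath hG u v).takeUntil hz)
  have h2 : (tpath G hG u v).dropUntil z hz = tpath G hG z v :=
    tpath_eq hG _ ((tpath_isPath hG u v).dropUntil hz)
  rw [← h1, ← h2, Walk.take_spec]

variable (rep : V → V)
  (hcell : ∀ u x : V, rep x = rep u → ∀ y ∈ (tpath G hG u x).support, rep y = rep u)

include hG hcell

/-- At most one edge of `G` joins two given distinct cells. -/
lemma cross_unique {x1 y1 x2 y2 : V} (h1 : G.Adj x1 y1) (h2 : G.Adj x2 y2)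
    (hx : rep x1 = rep x2) (hy : rep y1 = rep y2) (hne : rep x1 ≠ rep y1) :
    x1 = x2 ∧ y1 = y2 := by
  have hsy : ∀ z ∈ (tpath G hG y1 y2).support, rep z = rep y1 := hcell y1 y2 hy.symm
  have hxx : x1 = x2 := by
    by_contra hxx
    have hW : (Walk.cons h1 ((tpath G hG y1 y2).append (Walk.cons h2.symm Walk.nil))).IsPath := by
      rw [Walk.cons_isPath_iff]
      constructor
      · rw [Walk.isPath_def, Walk.support_append]
        refine List.Nodup.append ((Walk.isPath_def _).mp (tpath_isPath hG y1 y2)) ?_ ?_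
        · simp
        · intro z hz hz2
          simp only [Walk.support_cons, Walk.support_nil, List.tail_cons,
            List.mem_singleton] at hz2
          subst hz2
          exact hne (hx.trans (hsy _ hz))
      · rw [Walk.mem_support_append_iff]
        rintro (hu | hu)
        · exact hne (hsy _ hu)
        · simp only [Walk.support_cons, Walk.support_nil, List.mem_cons,
            List.mem_singleton, List.not_mem_nil, or_false] at hu
          rcases hu with hu | hu
          · exact hne ((congrArg rep hu).trans hy.symm)
          · exact hxx hu
    have hWt := tpath_eq hG _ hW
    have hy1mem : y1 ∈ (tpath G hG x1 x2).support := by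
      rw [← hWt]
      simp only [Walk.support_cons, List.mem_cons, Walk.mem_support_append_iff]
      exact Or.inr (Or.inl (Walk.start_mem_support _))
    exact hne (hcell x1 x2 hx.symm y1 hy1mem).symm
  subst hxx
  refine ⟨rfl, ?_⟩
  by_contra hyy
  have hne2 : ¬ x1 = y2 := fun h => hne ((congrArg rep h).trans hy.symm)
  have hW : (Walk.cons h1.symm (Walk.cons h2 Walk.nil) : G.Walk y1 y2).IsPath := by
    rw [Walk.cons_isPath_iff, Walk.cons_isPath_iff]
    refine ⟨⟨Walk.IsPath.nil, by simpa using hne2⟩, ?_⟩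
    simp only [Walk.support_cons, Walk.support_nil, List.mem_cons, List.mem_singleton,
      List.not_mem_nil, or_false]
    rintro (h | h)
    · exact hne (congrArg rep h.symm)
    · exact hyy h
  have hWt := tpath_eq hG _ hW
  have hx1mem : x1 ∈ (tpath G hG y1 y2).support := by
    rw [← hWt]; simp
  exact hne (hsy _ hx1mem)

/-- Entry lemma: the structure of tree paths from `u` into the cell of `v`. -/
lemma entry_aux {u v : V} (p : G.Walk u v) (hp : p.IsPath) (hne : rep u ≠ rep v) :
    ∃ (y0 w0 : V) (h : G.Adj y0 w0), rep w0 = rep v ∧ rep y0 ≠ rep v ∧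
      (∀ z ∈ (tpath G hG u y0).support, rep z ≠ rep v) ∧
      ∀ x', rep x' = rep v →
        tpath G hG u x' = (tpath G hG u y0).append (Walk.cons h (tpath G hG w0 x')) := by
  induction p with
  | nil => exact absurd rfl hne
  | @cons u u₂ v h' q ih =>
    have hq : q.IsPath := hp.of_cons
    have hqt : q = tpath G hG u₂ v := tpath_eq hG q hq
    have hunq : u ∉ q.support := ((Walk.cons_isPath_iff h' q).mp hp).2
    by_cases h2 : rep u₂ = rep v
    · refine ⟨u, u₂, h', h2, hne, ?_, ?_⟩
      · intro z hz
        rw [tpath_self] at hz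
        simp only [Walk.support_nil, List.mem_singleton] at hz
        subst hz; exact hne
      · intro x' hx'
        have hc : ∀ z ∈ (tpath G hG u₂ x').support, rep z = rep u₂ :=
          hcell u₂ x' (hx'.trans h2.symm)
        have hW : (Walk.cons h' (tpath G hG u₂ x')).IsPath := by
          rw [Walk.cons_isPath_iff]
          exact ⟨tpath_isPath hG u₂ x', fun hu => hne ((hc u hu).trans h2)⟩
        rw [tpath_self, Walk.nil_append]
        exact (tpath_eq hG _ hW).symm
    · obtain ⟨y0, w0, h, hw0, hy0, hpre, heq⟩ := ih hq h2
      have hy0q : y0 ∈ q.support := by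
        rw [hqt, heq v rfl, Walk.mem_support_append_iff]
        exact Or.inl (Walk.end_mem_support _)
      have hpre_sub : (tpath G hG u₂ y0).support ⊆ q.support := by
        intro x hx
        rw [hqt, heq v rfl]
        exact Walk.subset_support_append_left _ _ hx
      have hupre : u ∉ (tpath G hG u₂ y0).support := fun hu => hunq (hpre_sub hu)
      have hprepath : (Walk.cons h' (tpath G hG u₂ y0)).IsPath :=
        (Walk.cons_isPath_iff _ _).mpr ⟨tpath_isPath hG u₂ y0, hupre⟩
      have hprefix : tpath G hG u y0 = Walk.cons h' (tpath G hG u₂ y0) :=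
        (tpath_eq hG _ hprepath).symm
      refine ⟨y0, w0, h, hw0, hy0, ?_, ?_⟩
      · intro z hz
        rw [hprefix] at hz
        simp only [Walk.support_cons, List.mem_cons] at hz
        rcases hz with hz | hz
        · subst hz; exact hne
        · exact hpre z hz
      · intro x' hx'
        have hux' : u ∉ (tpath G hG u₂ x').support := by
          rw [heq x' hx', Walk.mem_support_append_iff]
          rintro (hu | hu)
          · exact hupre hu
          · simp only [Walk.support_cons, List.mem_cons] at hu
            rcases hu with hu | hu
            · exact hunq (hu ▸ hy0q)
            · exact hne ((hcell w0 x' (hx'.trans hw0.symm) u hu).trans hw0)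
        have hW : (Walk.cons h' (tpath G hG u₂ x')).IsPath :=
          (Walk.cons_isPath_iff _ _).mpr ⟨tpath_isPath hG u₂ x', hux'⟩
        rw [hprefix, Walk.cons_append, ← heq x' hx']
        exact (tpath_eq hG _ hW).symm

lemma entry {u v : V} (hne : rep u ≠ rep v) :
    ∃ (y0 w0 : V) (h : G.Adj y0 w0), rep w0 = rep v ∧ rep y0 ≠ rep v ∧
      (∀ z ∈ (tpath G hG u y0).support, rep z ≠ rep v) ∧
      ∀ x', rep x' = rep v →
        tpath G hG u x' = (tpath G hG u y0).append (Walk.cons h (tpath G hG w0 x')) :=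
  entry_aux hG rep hcell (tpath G hG u v) (tpath_isPath hG u v) hne

omit hcell in
lemma map_rep_toFinset_const {l : List V} (hl : l ≠ []) {a : V} (h : ∀ z ∈ l, rep z = a) :
    (l.map rep).toFinset = {a} := by
  ext c
  simp only [List.mem_toFinset, List.mem_map, Finset.mem_singleton]
  constructor
  · rintro ⟨z, hz, rfl⟩; exact h z hz
  · rintro rfl
    obtain ⟨z, hz⟩ := List.exists_mem_of_ne_nil l hl
    exact ⟨z, hz, h z hz⟩

/-- Existence of a leaf cell, together with its unique neighbouring cell. -/
lemma exists_leaf (A : Finset V) (hA : ∀ a ∈ A, rep a = a)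
    (hconnA : ∀ u v : V, rep u ∈ A → rep v ∈ A → ∀ x ∈ (tpath G hG u v).support, rep x ∈ A)
    {r a' : V} (hr : r ∈ A) (ha' : a' ∈ A) (hner : a' ≠ r) :
    ∃ (a y0 w0 : V), G.Adj y0 w0 ∧ a ∈ A ∧ rep w0 = a ∧ rep y0 ∈ A ∧ rep y0 ≠ a ∧
      ∀ b ∈ A.erase a, (∃ u v : V, G.Adj u v ∧ rep u = a ∧ rep v = b) → b = rep y0 := by
  classical
  set f : V → ℕ := fun v => (((tpath G hG r v).support.map rep).toFinset.card) with hf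
  set S : Finset V := Finset.univ.filter (fun v => rep v ∈ A ∧ rep v ≠ r) with hS
  have haS : a' ∈ S := by
    simp only [hS, Finset.mem_filter, Finset.mem_univ, true_and]
    rw [hA a' ha']; exact ⟨ha', hner⟩
  obtain ⟨m, hmS, hmax⟩ := S.exists_max_image f ⟨a', haS⟩
  simp only [hS, Finset.mem_filter, Finset.mem_univ, true_and] at hmS
  obtain ⟨hmA, hmr⟩ := hmS
  have hrA : rep r = r := hA r hr
  have hram : rep r ≠ rep m := by rw [hrA]; exact fun hh => hmr hh.symm
  obtain ⟨y0, w0, h, hw0, hy0, hpre, heq⟩ := entry hG rep hcell hram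
  have hy0mem : y0 ∈ (tpath G hG r m).support := by
    rw [heq m rfl, Walk.mem_support_append_iff]
    exact Or.inl (Walk.end_mem_support _)
  have hy0A : rep y0 ∈ A := hconnA r m (by rw [hrA]; exact hr) hmA y0 hy0mem
  refine ⟨rep m, y0, w0, h, hmA, hw0, hy0A, hy0, ?_⟩
  rintro b hbA ⟨x, y, hxy, hx, hy⟩
  have hba : b ≠ rep m := (Finset.ne_of_mem_erase hbA)
  have hbA' : b ∈ A := Finset.mem_of_mem_erase hbA
  by_contra hb
  -- decomposition of the path r → x
  have hx_dec : tpath G hG r x = (tpath G hG r y0).append (Walk.cons h (tpath G hG w0 x)) :=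
    heq x hx
  have hxw0 : rep x = rep w0 := hx.trans hw0.symm
  have hcellw0x : ∀ z ∈ (tpath G hG w0 x).support, rep z = rep w0 := hcell w0 x hxw0
  -- dispose of the case b = r
  by_cases hbr : b = r
  · have hyb : rep y = rep r := by rw [hy, hbr, hrA]
    have hcellry : ∀ z ∈ (tpath G hG r y).support, rep z = rep r := hcell r y hyb
    have hW : ((tpath G hG r y).append (Walk.cons hxy.symm Walk.nil)).IsPath := by
      rw [Walk.isPath_def, Walk.support_append]
      refine List.Nodup.append ((Walk.isPath_def _).mp (tpath_isPath hG r y)) (by simp) ?_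
      intro z hz hz2
      simp only [Walk.support_cons, Walk.support_nil, List.tail_cons, List.mem_singleton] at hz2
      subst hz2
      have : rep z = rep r := hcellry z hz
      rw [hx, hrA] at this
      exact hmr (this ▸ rfl) |>.elim
    have hWt := tpath_eq hG _ hW
    have hy0mem' : y0 ∈ ((tpath G hG r y).append (Walk.cons hxy.symm Walk.nil)).support := by
      rw [hWt, hx_dec, Walk.mem_support_append_iff]
      exact Or.inl (Walk.end_mem_support _)
    rw [Walk.mem_support_append_iff] at hy0mem'
    rcases hy0mem' with hu | hu
    · have := hcellry y0 hu
      rw [hrA, ← hbr] at this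
      exact hb this.symm
    · simp only [Walk.support_cons, Walk.support_nil, List.mem_cons, List.mem_singleton,
        List.not_mem_nil, or_false] at hu
      rcases hu with hu | hu
      · exact hb ((congrArg rep hu).trans hy).symm
      · exact hy0 ((congrArg rep hu).trans hx)
  -- main case : b ≠ r; no vertex of cell b lies on the path r → x
  · have claim : ∀ z ∈ (tpath G hG r x).support, rep z ≠ b := by
      intro z hz hzb
      rw [hx_dec, Walk.mem_support_append_iff] at hz
      rcases hz with hz | hz
      · -- z on the prefix r → y0
        have hdrop : (tpath G hG r y0).dropUntil z hz = tpath G hG z y0 :=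
          tpath_eq hG _ ((tpath_isPath hG r y0).dropUntil hz)
        have hsubdrop : (tpath G hG z y0).support ⊆ (tpath G hG r y0).support := by
          rw [← hdrop]; exact Walk.support_dropUntil_subset _ hz
        have hP1 : ((tpath G hG z y0).append (Walk.cons h (tpath G hG w0 x))).IsPath := by
          rw [Walk.isPath_def, Walk.support_append]
          simp only [Walk.support_cons, List.tail_cons]
          refine List.Nodup.append ((Walk.isPath_def _).mp (tpath_isPath hG z y0))
            ((Walk.isPath_def _).mp (tpath_isPath hG w0 x)) ?_
          intro t ht ht2
          have h1 : rep t ≠ rep m := hpre t (hsubdrop ht)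
          exact h1 ((hcellw0x t ht2).trans hw0)
        have hP1t := tpath_eq hG _ hP1
        have hyz : rep y = rep z := by rw [hy, hzb]
        have hcellzy : ∀ t ∈ (tpath G hG z y).support, rep t = rep z := hcell z y hyz
        have hP2 : ((tpath G hG z y).append (Walk.cons hxy.symm Walk.nil)).IsPath := by
          rw [Walk.isPath_def, Walk.support_append]
          refine List.Nodup.append ((Walk.isPath_def _).mp (tpath_isPath hG z y)) (by simp) ?_
          intro t ht ht2
          simp only [Walk.support_cons, Walk.support_nil, List.tail_cons,
            List.mem_singleton] at ht2
          subst ht2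
          have : rep t = rep z := hcellzy t ht
          rw [hx, hzb] at this
          exact hba this.symm
        have hP2t := tpath_eq hG _ hP2
        have hy0P1 : y0 ∈ ((tpath G hG z y0).append (Walk.cons h (tpath G hG w0 x))).support := by
          rw [Walk.mem_support_append_iff]
          exact Or.inl (Walk.end_mem_support _)
        have hy0P2 : y0 ∈ ((tpath G hG z y).append (Walk.cons hxy.symm Walk.nil)).support := by
          rw [hP2t, ← hP1t]; exact hy0P1
        rw [Walk.mem_support_append_iff] at hy0P2
        rcases hy0P2 with hu | hu
        · have := hcellzy y0 hu
          rw [hzb] at this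
          exact hb this.symm
        · simp only [Walk.support_cons, Walk.support_nil, List.mem_cons, List.mem_singleton,
            List.not_mem_nil, or_false] at hu
          rcases hu with hu | hu
          · exact hb ((congrArg rep hu).trans hy).symm
          · exact hy0 ((congrArg rep hu).trans hx)
      · -- z in the cell part
        simp only [Walk.support_cons, List.mem_cons] at hz
        rcases hz with hz | hz
        · exact hb (((congrArg rep hz).symm.trans hzb).symm)
        · have := hcellw0x z hz
          rw [hw0] at this
          exact hba (hzb.symm.trans this)
    -- y is not on the path r → x
    have hynot : y ∉ (tpath G hG r x).support := fun hyy => claim y hyy hy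
    have hW : ((tpath G hG r x).append (Walk.cons hxy Walk.nil)).IsPath := by
      rw [Walk.isPath_def, Walk.support_append]
      refine List.Nodup.append ((Walk.isPath_def _).mp (tpath_isPath hG r x)) (by simp) ?_
      intro t ht ht2
      simp only [Walk.support_cons, Walk.support_nil, List.tail_cons, List.mem_singleton] at ht2
      subst ht2
      exact hynot ht
    have hWt : tpath G hG r y = (tpath G hG r x).append (Walk.cons hxy Walk.nil) :=
      (tpath_eq hG _ hW).symm
    -- counting cells
    have hcw0x_ne : (tpath G hG w0 x).support ≠ [] := Walk.support_ne_nil _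
    have hcw0m_ne : (tpath G hG w0 m).support ≠ [] := Walk.support_ne_nil _
    have hsx : ((tpath G hG r x).support.map rep).toFinset
        = ((tpath G hG r y0).support.map rep).toFinset ∪ {rep m} := by
      rw [hx_dec, Walk.support_append, List.map_append, List.toFinset_append]
      congr 1
      simp only [Walk.support_cons, List.tail_cons]
      exact map_rep_toFinset_const hG rep hcw0x_ne
        (fun z hz => (hcellw0x z hz).trans hw0)
    have hsm : ((tpath G hG r m).support.map rep).toFinset
        = ((tpath G hG r y0).support.map rep).toFinset ∪ {rep m} := by
      rw [heq m rfl, Walk.support_append, List.map_append, List.toFinset_append]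
      congr 1
      simp only [Walk.support_cons, List.tail_cons]
      exact map_rep_toFinset_const hG rep hcw0m_ne
        (fun z hz => (hcell w0 m hw0.symm z hz).trans hw0)
    have hsy' : ((tpath G hG r y).support.map rep).toFinset
        = ((tpath G hG r x).support.map rep).toFinset ∪ {b} := by
      rw [hWt, Walk.support_append, List.map_append, List.toFinset_append]
      congr 1
      simp only [Walk.support_cons, Walk.support_nil, List.tail_cons, List.map_cons,
        List.map_nil]
      simp [hy]
    have hbnot : b ∉ ((tpath G hG r x).support.map rep).toFinset := by
      simp only [List.mem_toFinset, List.mem_map]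
      rintro ⟨z, hz, hzb⟩
      exact claim z hz hzb
    have hfy : f y = f x + 1 := by
      show (((tpath G hG r y).support.map rep).toFinset.card)
          = (((tpath G hG r x).support.map rep).toFinset.card) + 1
      rw [hsy', Finset.union_comm, ← Finset.insert_eq, Finset.card_insert_of_notMem hbnot]
    have hfxm : f x = f m := by
      show (((tpath G hG r x).support.map rep).toFinset.card)
          = (((tpath G hG r m).support.map rep).toFinset.card)
      rw [hsx, hsm]
    have hyS : y ∈ S := by
      simp only [hS, Finset.mem_filter, Finset.mem_univ, true_and, hy]
      exact ⟨hbA', hbr⟩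
    have := hmax y hyS
    rw [hfy, hfxm] at this
    omega

omit hG hcell in
variable (G) in
noncomputable def nbrs (A : Finset V) (a : V) : Finset V :=
  (A.erase a).filter (fun b => ∃ u v : V, G.Adj u v ∧ rep u = a ∧ rep v = b)

omit hG hcell in
variable (G) in
noncomputable def leavesF (A : Finset V) : Finset V :=
  A.filter (fun a => (nbrs G rep A a).card = 1)

omit hG hcell in
variable (G) in
noncomputable def q2F (A : Finset V) : Finset V :=
  A.filter (fun a => (nbrs G rep A a).card = 2 ∧ ∃ x : V, x ≠ a ∧ rep x = a)

variable (hrep : ∀ v, rep (rep v) = rep v)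

include hrep in
lemma main_bundle (n : ℕ) : ∀ A : Finset V, A.card ≤ n →
    (∀ a ∈ A, rep a = a) →
    (∀ u v : V, rep u ∈ A → rep v ∈ A → ∀ x ∈ (tpath G hG u v).support, rep x ∈ A) →
    ∃ P : Finset (V × V),
      P.card ≤ 2 * (leavesF G rep A).card + (q2F G rep A).card ∧
      {e : Sym2 V | e ∈ G.edgeSet ∧
          ∃ u v : V, e = s(u, v) ∧ rep u ≠ rep v ∧ rep u ∈ A ∧ rep v ∈ A}
        = {e : Sym2 V | ∃ p ∈ P, e ∈ (tpath G hG p.1 p.2).edges} ∧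
      (∀ p ∈ P, ∀ z ∈ (tpath G hG p.1 p.2).support, rep z ∈ A) ∧
      (∀ x y : V, G.Adj x y → rep x ∈ A → rep y ∈ A → rep x ≠ rep y →
        (nbrs G rep A (rep x)).card = 1 → ∃ p ∈ P, x = p.1 ∨ x = p.2) := by
  induction n with
  | zero =>
    intro A hcard hA hconn
    refine ⟨∅, by simp, ?_, by simp, ?_⟩
    · ext e
      constructor
      · rintro ⟨he, u, v, rfl, hne, huA, hvA⟩
        exact absurd (Finset.card_le_one.mp (by omega) _ huA _ hvA) hne
      · rintro ⟨p, hp, -⟩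
        exact absurd hp (Finset.notMem_empty p)
    · intro x y _ hxA hyA hne _
      exact absurd (Finset.card_le_one.mp (by omega) _ hxA _ hyA) hne
  | succ n ih =>
    intro A hcard hA hconn
    by_cases hsmall : A.card ≤ 1
    · refine ⟨∅, by simp, ?_, by simp, ?_⟩
      · ext e
        constructor
        · rintro ⟨he, u, v, rfl, hne, huA, hvA⟩
          exact absurd (Finset.card_le_one.mp hsmall _ huA _ hvA) hne
        · rintro ⟨p, hp, -⟩
          exact absurd hp (Finset.notMem_empty p)
      · intro x y _ hxA hyA hne _
        exact absurd (Finset.card_le_one.mp hsmall _ hxA _ hyA) hne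
    -- now 2 ≤ A.card
    obtain ⟨a', ha'A, r, hrA, hner⟩ := Finset.one_lt_card.mp (show 1 < A.card by omega)
    obtain ⟨a, y0, w0, hadj, haA, hw0, hy0A, hy0ne, huniq⟩ :=
      exists_leaf hG rep hcell A hA hconn hrA ha'A hner
    have hrepa : rep a = a := hA a haA
    have hrepb0 : rep (rep y0) = rep y0 := hrep y0
    have hadjwy : G.Adj w0 y0 := hadj.symm
    have huniq_edge : ∀ x y : V, G.Adj x y → rep x = a → rep y ∈ A → rep y ≠ a →
        x = w0 ∧ y = y0 := by
      intro x y hxy hx hyA hyne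
      have hyb : rep y = rep y0 :=
        huniq (rep y) (Finset.mem_erase.mpr ⟨hyne, hyA⟩) ⟨x, y, hxy, hx, rfl⟩
      refine cross_unique hG rep hcell hxy hadjwy (by rw [hx, hw0]) hyb ?_
      rw [hx, hyb]
      exact fun hh => hy0ne hh.symm
    have hnbrs_a : nbrs G rep A a = {rep y0} := by
      ext c
      simp only [nbrs, Finset.mem_filter, Finset.mem_singleton]
      constructor
      · rintro ⟨hc, hex⟩
        exact huniq c hc hex
      · rintro rfl
        exact ⟨Finset.mem_erase.mpr ⟨hy0ne, hy0A⟩, w0, y0, hadjwy, hw0, rfl⟩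
    have hdeg_a : (nbrs G rep A a).card = 1 := by rw [hnbrs_a]; simp
    have ha_leaf : a ∈ leavesF G rep A := Finset.mem_filter.mpr ⟨haA, hdeg_a⟩
    by_cases h2 : A.card = 2
    · -- two-element case
      have hsub : ({a, rep y0} : Finset V) ⊆ A := by
        intro c hc
        rcases Finset.mem_insert.mp hc with rfl | hc
        · exact haA
        · rw [Finset.mem_singleton.mp hc]; exact hy0A
      have hc2 : ({a, rep y0} : Finset V).card = 2 := by
        rw [Finset.card_insert_of_notMem (by simp [Ne.symm hy0ne])]
        simp
      have hAeq : A = {a, rep y0} :=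
        (Finset.eq_of_subset_of_card_le hsub (by omega)).symm
      have htp : tpath G hG w0 y0 = Walk.cons hadjwy Walk.nil := tpath_adj hG hadjwy
      have hmemA : ∀ c, rep c ∈ A → rep c = a ∨ rep c = rep y0 := by
        intro c hc
        rw [hAeq] at hc
        rcases Finset.mem_insert.mp hc with h | h
        · exact Or.inl h
        · exact Or.inr (Finset.mem_singleton.mp h)
      refine ⟨{(w0, y0)}, ?_, ?_, ?_, ?_⟩
      · have h1 : 1 ≤ (leavesF G rep A).card := Finset.card_pos.mpr ⟨a, ha_leaf⟩
        simp only [Finset.card_singleton]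
        omega
      · ext e
        constructor
        · rintro ⟨he, u, v, rfl, hne, huA, hvA⟩
          have hAdj : G.Adj u v := he
          rcases hmemA u huA with hu | hu
          · obtain ⟨hh1, hh2⟩ := huniq_edge u v hAdj hu hvA
              (fun hh => hne (hu.trans hh.symm))
            exact ⟨(w0, y0), Finset.mem_singleton_self _, by rw [htp, hh1, hh2]; simp⟩
          · have hva : rep v = a := by
              rcases hmemA v hvA with h | h
              · exact h
              · exact absurd (hu.trans h.symm) hne
            obtain ⟨hh1, hh2⟩ := huniq_edge v u hAdj.symm hva huA
              (fun hh => hne (hh.trans hva.symm))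
            refine ⟨(w0, y0), Finset.mem_singleton_self _, ?_⟩
            rw [htp, hh1, hh2]
            simp [Sym2.eq_swap]
        · rintro ⟨p, hp, he⟩
          rw [Finset.mem_singleton] at hp
          subst hp
          rw [htp] at he
          simp only [Walk.edges_cons, Walk.edges_nil, List.mem_singleton] at he
          subst he
          refine ⟨hadjwy, w0, y0, rfl, ?_, ?_, hy0A⟩
          · rw [hw0]; exact fun hh => hy0ne hh.symm
          · rw [hw0]; exact haA
      · intro p hp z hz
        rw [Finset.mem_singleton] at hp
        subst hp
        rw [htp] at hz
        simp only [Walk.support_cons, Walk.support_nil, List.mem_cons,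
          List.mem_singleton, List.not_mem_nil, or_false] at hz
        rcases hz with rfl | rfl
        · rw [hw0]; exact haA
        · exact hy0A
      · intro x y hxy hxA hyA hne _
        rcases hmemA x hxA with hx | hx
        · obtain ⟨hh1, hh2⟩ := huniq_edge x y hxy hx hyA (fun hh => hne (hx.trans hh.symm))
          exact ⟨(w0, y0), Finset.mem_singleton_self _, Or.inl hh1⟩
        · have hya : rep y = a := by
            rcases hmemA y hyA with h | h
            · exact h
            · exact absurd (hx.trans h.symm) hne
          obtain ⟨hh1, hh2⟩ := huniq_edge y x hxy.symm hya hxA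
            (fun hh => hne (hh.trans hya.symm))
          exact ⟨(w0, y0), Finset.mem_singleton_self _, Or.inr hh2⟩
    · -- main step : A.card >= 3
      -- main step : A.card ≥ 3
      set A' : Finset V := A.erase a with hA'def
      have haA' : a ∉ A' := Finset.notMem_erase a A
      have hb0A' : rep y0 ∈ A' := Finset.mem_erase.mpr ⟨hy0ne, hy0A⟩
      have hA'sub : A' ⊆ A := Finset.erase_subset a A
      have hA'card : A'.card = A.card - 1 := Finset.card_erase_of_mem haA
      have hA' : ∀ c ∈ A', rep c = c := fun c hc => hA c (hA'sub hc)
      have hconn' : ∀ u v : V, rep u ∈ A' → rep v ∈ A' →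
          ∀ z ∈ (tpath G hG u v).support, rep z ∈ A' := by
        intro u v huA' hvA' z hz
        have huA : rep u ∈ A := hA'sub huA'
        have hvA : rep v ∈ A := hA'sub hvA'
        have hzA : rep z ∈ A := hconn u v huA hvA z hz
        refine Finset.mem_erase.mpr ⟨?_, hzA⟩
        intro hza
        have hua : rep u ≠ rep z := by rw [hza]; exact (Finset.mem_erase.mp huA').1
        have hva : rep v ≠ rep z := by rw [hza]; exact (Finset.mem_erase.mp hvA').1
        obtain ⟨y1, w1, h1, hw1, hy1, -, heq1⟩ := entry hG rep hcell hua
        obtain ⟨y2, w2, h2, hy2w, hy2, -, heq2⟩ := entry hG rep hcell hva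
        have hsplit : tpath G hG u v = (tpath G hG u z).append (tpath G hG z v) :=
          tpath_split hG hz
        have hy1m : y1 ∈ (tpath G hG u z).support := by
          rw [heq1 z rfl, Walk.mem_support_append_iff]
          exact Or.inl (Walk.end_mem_support _)
        have hy2m : y2 ∈ (tpath G hG z v).support := by
          rw [← mem_support_tpath_symm hG, heq2 z rfl, Walk.mem_support_append_iff]
          exact Or.inl (Walk.end_mem_support _)
        have hy1uv : y1 ∈ (tpath G hG u v).support := by
          rw [hsplit, Walk.mem_support_append_iff]; exact Or.inl hy1m
        have hy2uv : y2 ∈ (tpath G hG u v).support := by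
          rw [hsplit, Walk.mem_support_append_iff]; exact Or.inr hy2m
        have hy1A : rep y1 ∈ A := hconn u v huA hvA y1 hy1uv
        have hy2A : rep y2 ∈ A := hconn u v huA hvA y2 hy2uv
        have hy1za : rep y1 ≠ a := by rw [← hza]; exact hy1
        have hy2za : rep y2 ≠ a := by rw [← hza]; exact hy2
        have hy1b : rep y1 = rep y0 := huniq (rep y1)
          (Finset.mem_erase.mpr ⟨hy1za, hy1A⟩) ⟨w1, y1, h1.symm, by rw [hw1, hza], rfl⟩
        have hy2b : rep y2 = rep y0 := huniq (rep y2)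
          (Finset.mem_erase.mpr ⟨hy2za, hy2A⟩) ⟨w2, y2, h2.symm, by rw [hy2w, hza], rfl⟩
        obtain ⟨hyy, -⟩ := cross_unique hG rep hcell h1 h2 (hy1b.trans hy2b.symm)
          (hw1.trans hy2w.symm) (by rw [hy1b, hw1, hza]; exact fun hh => hy0ne hh)
        -- y1 = y2 appears twice on the path u → v
        have hnd : ((tpath G hG u z).support ++ ((tpath G hG z v).support.tail)).Nodup := by
          have := (Walk.isPath_def _).mp (tpath_isPath hG u v)
          rw [hsplit, Walk.support_append] at this
          exact this
        have hy2tail : y2 ∈ (tpath G hG z v).support.tail := by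
          have hcons := Walk.support_eq_cons (tpath G hG z v)
          have hy2z : y2 ≠ z := fun hh => hy2 (by rw [hh])
          rcases List.mem_cons.mp (hcons ▸ hy2m) with h | h
          · exact absurd h hy2z
          · exact h
        have hdisj := (List.nodup_append'.mp hnd).2.2
        exact hdisj (hyy ▸ hy1m) hy2tail
      obtain ⟨P', hcard', hset', hsupp', hwit'⟩ := ih A' (by omega) hA' hconn'
      -- neighbour-set relations
      have hAexp : ∀ c ∈ A', A.erase c = insert a (A'.erase c) := by
        intro c hc
        have hca : c ≠ a := (Finset.mem_erase.mp hc).1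
        ext t
        simp only [Finset.mem_erase, Finset.mem_insert, hA'def]
        constructor
        · rintro ⟨htc, htA⟩
          by_cases hta : t = a
          · exact Or.inl hta
          · exact Or.inr ⟨htc, hta, htA⟩
        · rintro (rfl | ⟨htc, hta, htA⟩)
          · exact ⟨Ne.symm hca, haA⟩
          · exact ⟨htc, htA⟩
      have hn2 : ∀ c ∈ A', c ≠ rep y0 → nbrs G rep A c = nbrs G rep A' c := by
        intro c hc hcb
        show (A.erase c).filter _ = (A'.erase c).filter _
        rw [hAexp c hc, Finset.filter_insert, if_neg]
        rintro ⟨u, v, huv, hu, hv⟩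
        exact hcb (huniq c (Finset.mem_erase.mp hc |>.imp_left id |> fun h => Finset.mem_erase.mpr ⟨(Finset.mem_erase.mp hc).1, (Finset.mem_erase.mp hc).2⟩) ⟨v, u, huv.symm, hv, hu⟩)
      have hn3 : nbrs G rep A (rep y0) = insert a (nbrs G rep A' (rep y0)) := by
        show (A.erase (rep y0)).filter _ = insert a ((A'.erase (rep y0)).filter _)
        rw [hAexp (rep y0) hb0A', Finset.filter_insert, if_pos ⟨y0, w0, hadj, rfl, hw0⟩]
      have hanb : a ∉ nbrs G rep A' (rep y0) := by
        intro hh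
        exact haA' (Finset.mem_of_mem_erase (Finset.mem_of_mem_filter _ hh))
      have hd3 : (nbrs G rep A (rep y0)).card = (nbrs G rep A' (rep y0)).card + 1 := by
        rw [hn3, Finset.card_insert_of_notMem hanb]
      -- the neighbour degree of rep y0 inside A' is positive
      have hd'pos : 0 < (nbrs G rep A' (rep y0)).card := by
        have h2' : 1 < A'.card := by omega
        obtain ⟨c1, hc1, c2, hc2, hcc⟩ := Finset.one_lt_card.mp h2'
        have hex : ∃ c ∈ A', c ≠ rep y0 := by
          by_cases h : c1 = rep y0
          · exact ⟨c2, hc2, fun hh => hcc (h ▸ hh ▸ rfl)⟩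
          · exact ⟨c1, hc1, h⟩
        obtain ⟨c, hcA', hcb⟩ := hex
        have hrc : rep c = c := hA' c hcA'
        have hne : rep c ≠ rep (rep y0) := by rw [hrc, hrepb0]; exact hcb
        obtain ⟨y1, w1, h1, hw1, hy1, -, heq1⟩ := entry hG rep hcell hne
        have hy1m : y1 ∈ (tpath G hG c (rep y0)).support := by
          rw [heq1 (rep y0) rfl, Walk.mem_support_append_iff]
          exact Or.inl (Walk.end_mem_support _)
        have hy1A' : rep y1 ∈ A' := hconn' c (rep y0)
          (by rw [hrc]; exact hcA') (by rw [hrepb0]; exact hb0A') y1 hy1m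
        refine Finset.card_pos.mpr ⟨rep y1, Finset.mem_filter.mpr ⟨Finset.mem_erase.mpr
          ⟨by rw [← hrepb0]; exact hy1, hy1A'⟩, w1, y1, h1.symm, hw1.trans hrepb0, rfl⟩⟩
      -- continue
      -- membership characterisations
      have hbleaf' : rep y0 ∈ leavesF G rep A' ↔ (nbrs G rep A' (rep y0)).card = 1 := by
        simp [leavesF, Finset.mem_filter, hb0A']
      have hLmem : ∀ c, c ∈ leavesF G rep A ↔
          (c = a ∨ (c ≠ rep y0 ∧ c ∈ leavesF G rep A')) := by
        intro c
        constructor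
        · intro hc
          obtain ⟨hcA, hdc⟩ := Finset.mem_filter.mp hc
          by_cases hca : c = a
          · exact Or.inl hca
          · have hcA' : c ∈ A' := Finset.mem_erase.mpr ⟨hca, hcA⟩
            have hcb : c ≠ rep y0 := by
              rintro rfl
              rw [hd3] at hdc
              omega
            exact Or.inr ⟨hcb, Finset.mem_filter.mpr ⟨hcA',
              by rw [← hn2 c hcA' hcb]; exact hdc⟩⟩
        · rintro (rfl | ⟨hcb, hc⟩)
          · exact ha_leaf
          · obtain ⟨hcA', hdc⟩ := Finset.mem_filter.mp hc
            exact Finset.mem_filter.mpr ⟨hA'sub hcA', by rw [hn2 c hcA' hcb]; exact hdc⟩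
      have hQmem : ∀ c, c ∈ q2F G rep A ↔
          ((c = rep y0 ∧ (nbrs G rep A' (rep y0)).card = 1 ∧ ∃ t, t ≠ rep y0 ∧ rep t = rep y0)
            ∨ (c ≠ rep y0 ∧ c ∈ q2F G rep A')) := by
        intro c
        constructor
        · intro hc
          obtain ⟨hcA, hdc, hcompc⟩ := Finset.mem_filter.mp hc
          by_cases hcb : c = rep y0
          · subst hcb
            rw [hd3] at hdc
            exact Or.inl ⟨rfl, by omega, hcompc⟩
          · have hca : c ≠ a := by
              rintro rfl
              rw [hdeg_a] at hdc
              omega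
            have hcA' : c ∈ A' := Finset.mem_erase.mpr ⟨hca, hcA⟩
            exact Or.inr ⟨hcb, Finset.mem_filter.mpr ⟨hcA',
              by rw [← hn2 c hcA' hcb]; exact hdc, hcompc⟩⟩
        · rintro (⟨rfl, hd1, hcompc⟩ | ⟨hcb, hc⟩)
          · refine Finset.mem_filter.mpr ⟨hy0A, ?_, hcompc⟩
            rw [hd3, hd1]
          · obtain ⟨hcA', hdc, hcompc⟩ := Finset.mem_filter.mp hc
            exact Finset.mem_filter.mpr ⟨hA'sub hcA',
              by rw [hn2 c hcA' hcb]; exact hdc, hcompc⟩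
      have hLcard : (leavesF G rep A).card = ((leavesF G rep A').erase (rep y0)).card + 1 := by
        have hset : leavesF G rep A = insert a ((leavesF G rep A').erase (rep y0)) := by
          ext c
          rw [hLmem c, Finset.mem_insert, Finset.mem_erase]
        rw [hset, Finset.card_insert_of_notMem]
        intro hh
        exact haA' (Finset.mem_of_mem_filter _ (Finset.mem_of_mem_erase hh))
      have hQcard_erase : (q2F G rep A).erase (rep y0) = (q2F G rep A').erase (rep y0) := by
        ext c
        rw [Finset.mem_erase, Finset.mem_erase, hQmem c]
        constructor
        · rintro ⟨hcb, (⟨rfl, -⟩ | ⟨-, hc⟩)⟩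
          · exact absurd rfl hcb
          · exact ⟨hcb, hc⟩
        · rintro ⟨hcb, hc⟩
          exact ⟨hcb, Or.inr ⟨hcb, hc⟩⟩
      have hbq : rep y0 ∈ q2F G rep A ↔
          ((nbrs G rep A' (rep y0)).card = 1 ∧ ∃ t, t ≠ rep y0 ∧ rep t = rep y0) := by
        rw [hQmem (rep y0)]
        constructor
        · rintro (⟨-, hh⟩ | ⟨hh, -⟩)
          · exact hh
          · exact absurd rfl hh
        · intro hh
          exact Or.inl ⟨rfl, hh⟩
      have hbq' : rep y0 ∈ q2F G rep A' ↔
          ((nbrs G rep A' (rep y0)).card = 2 ∧ ∃ t, t ≠ rep y0 ∧ rep t = rep y0) := by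
        simp [q2F, Finset.mem_filter, hb0A']
      -- cross-edge set relation
      have hsetA : {e : Sym2 V | e ∈ G.edgeSet ∧
            ∃ u v : V, e = s(u, v) ∧ rep u ≠ rep v ∧ rep u ∈ A ∧ rep v ∈ A}
          = insert (s(w0, y0)) {e : Sym2 V | e ∈ G.edgeSet ∧
            ∃ u v : V, e = s(u, v) ∧ rep u ≠ rep v ∧ rep u ∈ A' ∧ rep v ∈ A'} := by
        ext e
        simp only [Set.mem_insert_iff, Set.mem_setOf_eq]
        constructor
        · rintro ⟨he, u, v, rfl, hne, huA, hvA⟩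
          have hAdj : G.Adj u v := he
          by_cases hua : rep u = a
          · obtain ⟨hh1, hh2⟩ := huniq_edge u v hAdj hua hvA
              (fun hh => hne (hua.trans hh.symm))
            left; rw [hh1, hh2]
          · by_cases hva : rep v = a
            · obtain ⟨hh1, hh2⟩ := huniq_edge v u hAdj.symm hva huA
                (fun hh => hne (hh.trans hva.symm))
              left; rw [hh1, hh2]; exact Sym2.eq_swap
            · right
              exact ⟨he, u, v, rfl, hne, Finset.mem_erase.mpr ⟨hua, huA⟩,
                Finset.mem_erase.mpr ⟨hva, hvA⟩⟩
        · rintro (rfl | ⟨he, u, v, rfl, hne, huA', hvA'⟩)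
          · refine ⟨hadjwy, w0, y0, rfl, ?_, ?_, hy0A⟩
            · rw [hw0]; exact fun hh => hy0ne hh.symm
            · rw [hw0]; exact haA
          · exact ⟨he, u, v, rfl, hne, hA'sub huA', hA'sub hvA'⟩
      by_cases hext : (nbrs G rep A' (rep y0)).card = 1 ∧ ¬∃ t, t ≠ rep y0 ∧ rep t = rep y0
      · -- EXTEND BRANCH
        obtain ⟨hd1, hncomp⟩ := hext
        have htriv : ∀ t, rep t = rep y0 → t = rep y0 := by
          intro t ht
          by_contra hne'
          exact hncomp ⟨t, hne', ht⟩
        have hy0b : y0 = rep y0 := htriv y0 rfl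
        obtain ⟨c, hc⟩ := Finset.card_pos.mp (by omega : 0 < (nbrs G rep A' (rep y0)).card)
        obtain ⟨hcmem, u', v', huv', hu', hv'⟩ := Finset.mem_filter.mp hc
        have hu'b : u' = rep y0 := htriv u' hu'
        have hcb : c ≠ rep y0 := (Finset.mem_erase.mp hcmem).1
        have hcA' : c ∈ A' := (Finset.mem_erase.mp hcmem).2
        have hv'A' : rep v' ∈ A' := by rw [hv']; exact hcA'
        have hu'A' : rep u' ∈ A' := by rw [hu']; exact hb0A'
        have hneuv : rep u' ≠ rep v' := by
          rw [hu', hv']; exact fun hh => hcb hh.symm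
        have hdegu' : (nbrs G rep A' (rep u')).card = 1 := by rw [hu']; exact hd1
        obtain ⟨p, hpP', hor⟩ := hwit' u' v' huv' hu'A' hv'A' hneuv hdegu'
        have hory : y0 = p.1 ∨ y0 = p.2 := by
          have hyu : y0 = u' := hy0b.trans hu'b.symm
          rcases hor with hh | hh
          · exact Or.inl (hyu.trans hh)
          · exact Or.inr (hyu.trans hh)
        obtain ⟨z, hzedge, hzsupp, hto⟩ :
            ∃ z : V, (∀ e, e ∈ (tpath G hG p.1 p.2).edges ↔ e ∈ (tpath G hG y0 z).edges) ∧
              (∀ t, t ∈ (tpath G hG p.1 p.2).support ↔ t ∈ (tpath G hG y0 z).support) ∧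
              ((z = p.2 ∧ y0 = p.1) ∨ (z = p.1 ∧ y0 = p.2)) := by
          rcases hory with hp1 | hp2
          · exact ⟨p.2, fun e => by rw [← hp1], fun t => by rw [← hp1],
              Or.inl ⟨rfl, hp1⟩⟩
          · refine ⟨p.1, fun e => ?_, fun t => ?_, Or.inr ⟨rfl, hp2⟩⟩
            · rw [← hp2]; exact mem_edges_tpath_symm hG
            · rw [← hp2]; exact mem_support_tpath_symm hG
        have hpsupp : ∀ t ∈ (tpath G hG y0 z).support, rep t ∈ A' :=
          fun t ht => hsupp' p hpP' t ((hzsupp t).mpr ht)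
        have hzw0 : w0 ∉ (tpath G hG y0 z).support := by
          intro hh
          have := hpsupp w0 hh
          rw [hw0] at this
          exact haA' this
        have hcons : tpath G hG w0 z = Walk.cons hadjwy (tpath G hG y0 z) := by
          refine (tpath_eq hG _ ?_).symm
          rw [Walk.cons_isPath_iff]
          exact ⟨tpath_isPath hG y0 z, hzw0⟩
        refine ⟨insert (w0, z) (P'.erase p), ?_, ?_, ?_, ?_⟩
        · have hc1 : (insert (w0, z) (P'.erase p)).card ≤ (P'.erase p).card + 1 :=
            Finset.card_insert_le _ _
          have hc2 : (P'.erase p).card + 1 = P'.card := Finset.card_erase_add_one hpP'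
          have hLL : (leavesF G rep A).card = (leavesF G rep A').card := by
            rw [hLcard, Finset.card_erase_add_one (hbleaf'.mpr hd1)]
          have hqa : rep y0 ∉ q2F G rep A := fun hh => hncomp (hbq.mp hh).2
          have hqa' : rep y0 ∉ q2F G rep A' := fun hh => hncomp (hbq'.mp hh).2
          have hQQ : q2F G rep A = q2F G rep A' := by
            rw [← Finset.erase_eq_of_notMem hqa, hQcard_erase,
              Finset.erase_eq_of_notMem hqa']
          rw [hLL, hQQ]
          omega
        · rw [hsetA, hset']
          ext e
          simp only [Set.mem_insert_iff, Set.mem_setOf_eq]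
          constructor
          · rintro (rfl | ⟨q, hq, he⟩)
            · refine ⟨(w0, z), Finset.mem_insert_self _ _, ?_⟩
              show s(w0, y0) ∈ (tpath G hG w0 z).edges
              rw [hcons, Walk.edges_cons]
              exact List.mem_cons_self
            · by_cases hqp : q = p
              · subst hqp
                refine ⟨(w0, z), Finset.mem_insert_self _ _, ?_⟩
                show e ∈ (tpath G hG w0 z).edges
                rw [hcons, Walk.edges_cons]
                exact List.mem_cons_of_mem _ ((hzedge e).mp he)
              · exact ⟨q, Finset.mem_insert_of_mem (Finset.mem_erase.mpr ⟨hqp, hq⟩), he⟩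
          · rintro ⟨q, hq, he⟩
            rcases Finset.mem_insert.mp hq with rfl | hq
            · have he' : e ∈ (tpath G hG w0 z).edges := he
              rw [hcons, Walk.edges_cons] at he'
              rcases List.mem_cons.mp he' with rfl | he''
              · exact Or.inl rfl
              · exact Or.inr ⟨p, hpP', (hzedge e).mpr he''⟩
            · exact Or.inr ⟨q, Finset.mem_of_mem_erase hq, he⟩
        · intro q hq t ht
          rcases Finset.mem_insert.mp hq with rfl | hq
          · have ht' : t ∈ (tpath G hG w0 z).support := ht
            rw [hcons] at ht'
            simp only [Walk.support_cons, List.mem_cons] at ht'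
            rcases ht' with rfl | ht'
            · rw [hw0]; exact haA
            · exact hA'sub (hpsupp t ht')
          · exact hA'sub (hsupp' q (Finset.mem_of_mem_erase hq) t ht)
        · intro x y hxy hxA hyA hnexy hdeg
          by_cases hxa : rep x = a
          · obtain ⟨hh1, hh2⟩ := huniq_edge x y hxy hxa hyA
              (fun hh => hnexy (hxa.trans hh.symm))
            exact ⟨(w0, z), Finset.mem_insert_self _ _, Or.inl hh1⟩
          · have hxb : rep x ≠ rep y0 := by
              intro hxb
              rw [hxb, hd3, hd1] at hdeg
              omega
            have hya : rep y ≠ a := by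
              intro hya
              obtain ⟨hh1, hh2⟩ := huniq_edge y x hxy.symm hya hxA
                (fun hh => hnexy (hh.trans hya.symm))
              exact hxb (by rw [hh2])
            have hxA' : rep x ∈ A' := Finset.mem_erase.mpr ⟨hxa, hxA⟩
            have hyA' : rep y ∈ A' := Finset.mem_erase.mpr ⟨hya, hyA⟩
            have hdeg' : (nbrs G rep A' (rep x)).card = 1 := by
              rw [← hn2 (rep x) hxA' hxb]; exact hdeg
            obtain ⟨q, hqP', hor'⟩ := hwit' x y hxy hxA' hyA' hnexy hdeg'
            by_cases hqp : q = p
            · subst hqp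
              refine ⟨(w0, z), Finset.mem_insert_self _ _, Or.inr ?_⟩
              rcases hto with ⟨hz2, hyp1⟩ | ⟨hz1, hyp2⟩
              · rcases hor' with hx1 | hx2
                · exact absurd (by rw [hx1, ← hyp1]) hxb
                · exact hx2.trans hz2.symm
              · rcases hor' with hx1 | hx2
                · exact hx1.trans hz1.symm
                · exact absurd (by rw [hx2, ← hyp2]) hxb
            · exact ⟨q, Finset.mem_insert_of_mem (Finset.mem_erase.mpr ⟨hqp, hqP'⟩), hor'⟩

      · -- SINGLETON BRANCH
        have htp : tpath G hG w0 y0 = Walk.cons hadjwy Walk.nil := tpath_adj hG hadjwy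
        refine ⟨insert (w0, y0) P', ?_, ?_, ?_, ?_⟩
        · have h1 : (insert (w0, y0) P').card ≤ P'.card + 1 := Finset.card_insert_le _ _
          by_cases hd1 : (nbrs G rep A' (rep y0)).card = 1
          · have hcomp : ∃ t, t ≠ rep y0 ∧ rep t = rep y0 := by
              by_contra hc; exact hext ⟨hd1, hc⟩
            have hbq_in : rep y0 ∈ q2F G rep A := hbq.mpr ⟨hd1, hcomp⟩
            have hbq'_out : rep y0 ∉ q2F G rep A' := by
              intro hh
              have := (hbq'.mp hh).1
              omega
            have hQA : (q2F G rep A).card = (q2F G rep A').card + 1 := by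
              rw [← Finset.card_erase_add_one hbq_in, hQcard_erase,
                Finset.erase_eq_of_notMem hbq'_out]
            have hLL : (leavesF G rep A).card = (leavesF G rep A').card := by
              rw [hLcard, Finset.card_erase_add_one (hbleaf'.mpr hd1)]
            omega
          · have hbl_out : rep y0 ∉ leavesF G rep A' := fun hh => hd1 (hbleaf'.mp hh)
            have hLA : (leavesF G rep A).card = (leavesF G rep A').card + 1 := by
              rw [hLcard, Finset.erase_eq_of_notMem hbl_out]
            have hbq_out : rep y0 ∉ q2F G rep A := fun hh => hd1 (hbq.mp hh).1
            have hQA : (q2F G rep A).card = ((q2F G rep A').erase (rep y0)).card := by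
              rw [← Finset.erase_eq_of_notMem hbq_out, hQcard_erase]
            have hQ'ge : (q2F G rep A').card ≤ ((q2F G rep A').erase (rep y0)).card + 1 := by
              by_cases hh : rep y0 ∈ q2F G rep A'
              · rw [Finset.card_erase_add_one hh]
              · rw [Finset.erase_eq_of_notMem hh]; omega
            omega
        · rw [hsetA, hset']
          ext e
          simp only [Set.mem_insert_iff, Set.mem_setOf_eq]
          constructor
          · rintro (rfl | ⟨p, hp, he⟩)
            · exact ⟨(w0, y0), Finset.mem_insert_self _ _, by rw [htp]; simp⟩
            · exact ⟨p, Finset.mem_insert_of_mem hp, he⟩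
          · rintro ⟨p, hp, he⟩
            rcases Finset.mem_insert.mp hp with rfl | hp
            · have he' : e ∈ (tpath G hG w0 y0).edges := he
              rw [htp] at he'
              simp only [Walk.edges_cons, Walk.edges_nil, List.mem_singleton] at he'
              exact Or.inl he'
            · exact Or.inr ⟨p, hp, he⟩
        · intro p hp z hz
          rcases Finset.mem_insert.mp hp with rfl | hp
          · have hz' : z ∈ (tpath G hG w0 y0).support := hz
            rw [htp] at hz'
            simp only [Walk.support_cons, Walk.support_nil, List.mem_cons,
              List.mem_singleton, List.not_mem_nil, or_false] at hz'
            rcases hz' with rfl | rfl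
            · rw [hw0]; exact haA
            · exact hy0A
          · exact hA'sub (hsupp' p hp z hz)
        · intro x y hxy hxA hyA hnexy hdeg
          by_cases hxa : rep x = a
          · obtain ⟨hh1, hh2⟩ := huniq_edge x y hxy hxa hyA
              (fun hh => hnexy (hxa.trans hh.symm))
            exact ⟨(w0, y0), Finset.mem_insert_self _ _, Or.inl hh1⟩
          · have hxb : rep x ≠ rep y0 := by
              intro hxb
              rw [hxb, hd3] at hdeg
              omega
            have hya : rep y ≠ a := by
              intro hya
              obtain ⟨hh1, hh2⟩ := huniq_edge y x hxy.symm hya hxA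
                (fun hh => hnexy (hh.trans hya.symm))
              exact hxb (by rw [hh2])
            have hxA' : rep x ∈ A' := Finset.mem_erase.mpr ⟨hxa, hxA⟩
            have hyA' : rep y ∈ A' := Finset.mem_erase.mpr ⟨hya, hyA⟩
            have hdeg' : (nbrs G rep A' (rep x)).card = 1 := by
              rw [← hn2 (rep x) hxA' hxb]; exact hdeg
            obtain ⟨p, hp, hor⟩ := hwit' x y hxy hxA' hyA' hnexy hdeg'
            exact ⟨p, Finset.mem_insert_of_mem hp, hor⟩


end Aux

/-- Model a contraction `Ḡ` of the tree `G` by a function `rep`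
assigning to each vertex the representative of its (connected) cell; compound vertices
are cells with more than one element.  Let `R` be a subtree of `Ḡ` given by a set `A`
of cells (representatives) which is connected in `Ḡ`.  If `R` has at most `s` leaves and
at most `q` compound vertices, then the preimage `E(R) ⊆ E(G)` (the edges of `G` joining
two distinct cells of `A`) is a union of at most `2s + q` paths of `G`, i.e. a
`(2s+q)`-bundle. -/
theorem subtree_of_contraction_is_bundle {V : Type*} [Fintype V] [DecidableEq V]
    (G : SimpleGraph V) (hG : G.IsTree)
    (rep : V → V) (hrep : ∀ v, rep (rep v) = rep v)
    (hcell : ∀ u x : V, rep x = rep u → ∀ y ∈ (tpath G hG u x).support, rep y = rep u)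
    (A : Finset V) (hA : ∀ a ∈ A, rep a = a)
    (hconn : ∀ u v : V, rep u ∈ A → rep v ∈ A → ∀ x ∈ (tpath G hG u v).support, rep x ∈ A)
    (s q : ℕ)
    (hleaves : (A.filter (fun a =>
      ((A.erase a).filter (fun b => ∃ u v : V, G.Adj u v ∧ rep u = a ∧ rep v = b)).card
        = 1)).card ≤ s)
    (hcompound : (A.filter (fun a => ∃ x : V, x ≠ a ∧ rep x = a)).card ≤ q) :
    ∃ P : Finset (V × V), P.card ≤ 2 * s + q ∧
      {e : Sym2 V | e ∈ G.edgeSet ∧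
          ∃ u v : V, e = s(u, v) ∧ rep u ≠ rep v ∧ rep u ∈ A ∧ rep v ∈ A}
        = {e : Sym2 V | ∃ p ∈ P, e ∈ (tpath G hG p.1 p.2).edges} := by
  
  obtain ⟨P, hcard, hset, -, -⟩ :=
    main_bundle hG rep hcell hrep A.card A le_rfl hA hconn
  refine ⟨P, ?_, hset⟩
  have h1 : (leavesF G rep A).card ≤ s := hleaves
  have h2 : (q2F G rep A).card ≤ q := by
    refine le_trans (Finset.card_le_card ?_) hcompound
    intro x hx
    obtain ⟨hxA, -, hcomp⟩ := Finset.mem_filter.mp hx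
    exact Finset.mem_filter.mpr ⟨hxA, hcomp⟩
  omega
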